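/- arXiv:1711.06988 — 5 statements merged into one kernel-verified Lean document; each statement's English description precedes it below -/
import Mathlib

section
/- For every derivation D in the Witt algebra W(1;1) over a field of characteristic p > 0, the p-th power D^p (taken in End(O(1;1))) lies in the one-dimensional subspace kD. Consequently, every Lie subalgebra of W(1;1) is a restricted Lie subalgebra. -/
section PthPow
variable {k : Type*} [Field k] {p : ℕ} {R : Type*} [CommRing R] [Algebra k R]

/-- In characteristic `p`, the `p`-th power of a derivation is a derivation. -/
def pthPowDer (hp : p.Prime) [CharP k p] [Nontrivial R] (D : Derivation k R R) :
    Derivation k R R where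
  toLinearMap := D.toLinearMap ^ p
  map_one_eq_zero' := by
    obtain ⟨n, hn⟩ : ∃ n, p = n + 1 := ⟨p - 1, (Nat.succ_pred_eq_of_pos hp.pos).symm⟩
    show (D.toLinearMap ^ p) 1 = 0
    rw [hn, pow_succ, Module.End.mul_apply]
    have : D.toLinearMap 1 = 0 := D.map_one_eq_zero
    rw [this, map_zero]
  leibniz' := by
    haveI : Fact p.Prime := ⟨hp⟩
    intro a c
    set Dl := D.toLinearMap with hDl
    set A := Module.End k R
    haveI : CharP (Module.End k A) p :=
      charP_of_injective_algebraMap (algebraMap k (Module.End k A)).injective p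
    have hstep : ∀ r : R,
        (LinearMap.mulLeft k Dl - LinearMap.mulRight k Dl) (LinearMap.mulLeft k r)
          = LinearMap.mulLeft k (Dl r) := by
      intro r
      ext s
      have hl := D.leibniz r s
      simp only [smul_eq_mul] at hl
      simp only [LinearMap.sub_apply, LinearMap.mulLeft_apply, LinearMap.mulRight_apply,
        Module.End.mul_apply, hDl, Derivation.coeFn_coe]
      linear_combination hl
    have hiter : ∀ (n : ℕ) (r : R),
        ((LinearMap.mulLeft k Dl - LinearMap.mulRight k Dl) ^ n) (LinearMap.mulLeft k r)
          = LinearMap.mulLeft k ((Dl ^ n) r) := by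
      intro n
      induction n with
      | zero => intro r; simp
      | succ n ih =>
          intro r
          rw [pow_succ, Module.End.mul_apply, hstep, ih, pow_succ, Module.End.mul_apply]
    have hsub : (LinearMap.mulLeft k Dl - LinearMap.mulRight k Dl) ^ p
        = LinearMap.mulLeft k (Dl ^ p) - LinearMap.mulRight k (Dl ^ p) := by
      rw [sub_pow_char_of_commute (R := Module.End k A) _ (LinearMap.commute_mulLeft_right (R := k) Dl Dl),
        LinearMap.pow_mulLeft, LinearMap.pow_mulRight]
    have := hiter p a
    rw [hsub] at this
    have h2 := congrFun (congrArg (fun (T : A) => ⇑T) this) c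
    simp only [LinearMap.sub_apply, LinearMap.mulLeft_apply, LinearMap.mulRight_apply,
      Module.End.mul_apply] at h2
    show (Dl ^ p) (a * c) = a • (Dl ^ p) c + c • (Dl ^ p) a
    simp only [smul_eq_mul]
    have : (Dl ^ p) (a * c) - a * (Dl ^ p) c = (Dl ^ p) a * c := by
      exact h2
    linear_combination this

end PthPow

section Witt
variable {k : Type*} [Field k] {p : ℕ} {R : Type*} [CommRing R] [Algebra k R]

variable (b : Module.Basis (Fin p) k R) (x : R)

/-- The derivation `d/dx` as a linear map, defined on the basis `x^i ↦ i x^(i-1)`. -/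
noncomputable def del0 : R →ₗ[k] R :=
  b.constr k (fun i => ((i : ℕ) : k) • x ^ ((i : ℕ) - 1))

variable [CharP k p]

theorem del0_pow (hx : x ^ p = 0) (hb : ∀ i : Fin p, b i = x ^ (i : ℕ)) (m : ℕ) :
    del0 b x (x ^ m) = (m : k) • x ^ (m - 1) := by
  rcases lt_or_ge m p with hm | hm
  · rw [← hb ⟨m, hm⟩]
    simpa [del0] using b.constr_basis k (fun i => ((i : ℕ) : k) • x ^ ((i : ℕ) - 1)) ⟨m, hm⟩
  · have h1 : x ^ m = 0 := pow_eq_zero_of_le hm hx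
    rw [h1, map_zero]
    rcases eq_or_lt_of_le hm with h | h
    · rw [← h, CharP.cast_eq_zero k p, zero_smul]
    · rw [pow_eq_zero_of_le (by omega : p ≤ m - 1) hx, smul_zero]

theorem del0_leibniz_pow (hx : x ^ p = 0) (hb : ∀ i : Fin p, b i = x ^ (i : ℕ)) (m n : ℕ) :
    del0 b x (x ^ m * x ^ n) = x ^ m * del0 b x (x ^ n) + x ^ n * del0 b x (x ^ m) := by
  rw [← pow_add, del0_pow b x hx hb, del0_pow b x hx hb, del0_pow b x hx hb]
  rcases Nat.eq_zero_or_pos m with hm | hm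
  · subst hm; simp
  rcases Nat.eq_zero_or_pos n with hn | hn
  · subst hn; simp
  have e1 : m + n - 1 = m + (n - 1) := by omega
  have e2 : m + n - 1 = n + (m - 1) := by omega
  have e3 : m + (n - 1) = m + n - 1 := by omega
  have e4 : n + (m - 1) = m + n - 1 := by omega
  have hc : ((m + n : ℕ) : k) = (m : k) + (n : k) := by push_cast; ring
  rw [mul_smul_comm, mul_smul_comm, ← pow_add, ← pow_add, e3, e4, hc, add_smul]
  abel

theorem del0_leibniz (hx : x ^ p = 0) (hb : ∀ i : Fin p, b i = x ^ (i : ℕ)) (a c : R) :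
    del0 b x (a * c) = a * del0 b x c + c * del0 b x a := by
  have hbil : ∀ i j : Fin p,
      del0 b x (b i * b j) = b i * del0 b x (b j) + b j * del0 b x (b i) := by
    intro i j
    rw [hb i, hb j]
    exact del0_leibniz_pow b x hx hb _ _
  -- bilinear reduction
  let B : R →ₗ[k] R →ₗ[k] R := LinearMap.mk₂ k
    (fun a c => del0 b x (a * c) - a * del0 b x c - c * del0 b x a)
    (by intro a a' c; simp only [add_mul, map_add]; ring)
    (by intro s a c; rw [smul_mul_assoc, map_smul, map_smul, smul_sub, smul_sub,
          smul_mul_assoc, mul_smul_comm])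
    (by intro a c c'; simp only [mul_add, map_add]; ring)
    (by intro s a c; rw [mul_smul_comm, map_smul, map_smul, smul_sub, smul_sub,
          smul_mul_assoc, mul_smul_comm])
  have hB : B = 0 := by
    apply b.ext
    intro i
    apply b.ext
    intro j
    have := hbil i j
    simp only [B, LinearMap.mk₂_apply, LinearMap.zero_apply]
    rw [this]; ring
  have := congrFun (congrArg (fun (T : R →ₗ[k] R →ₗ[k] R) => ⇑(T a)) hB) c
  simp only [B, LinearMap.mk₂_apply, LinearMap.zero_apply] at this
  linear_combination this

/-- The derivation `d/dx` of the truncated polynomial ring. -/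
noncomputable def del (hx : x ^ p = 0) (hb : ∀ i : Fin p, b i = x ^ (i : ℕ)) :
    Derivation k R R where
  toLinearMap := del0 b x
  map_one_eq_zero' := by
    have := del0_pow b x hx hb 0
    simpa using this
  leibniz' := by
    intro a c
    simp only [smul_eq_mul]
    exact del0_leibniz b x hx hb a c

theorem del_apply (hx : x ^ p = 0) (hb : ∀ i : Fin p, b i = x ^ (i : ℕ)) (r : R) :
    del b x hx hb r = del0 b x r := rfl

theorem del_x (hx : x ^ p = 0) (hb : ∀ i : Fin p, b i = x ^ (i : ℕ)) :
    del b x hx hb x = 1 := by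
  have := del0_pow b x hx hb 1
  rw [del_apply]
  simpa using this

theorem adjoin_x_eq_top (hb : ∀ i : Fin p, b i = x ^ (i : ℕ)) :
    Algebra.adjoin k {x} = ⊤ := by
  rw [Algebra.eq_top_iff]
  intro r
  have hle : Submodule.span k (Set.range b) ≤
      Subalgebra.toSubmodule (Algebra.adjoin k {x}) := by
    rw [Submodule.span_le]
    rintro _ ⟨i, rfl⟩
    rw [hb i]
    exact pow_mem (Algebra.subset_adjoin (Set.mem_singleton x)) _
  have : r ∈ Submodule.span k (Set.range b) := by rw [b.span_eq]; trivial
  exact hle this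

theorem derivation_ext (hb : ∀ i : Fin p, b i = x ^ (i : ℕ)) (D1 D2 : Derivation k R R)
    (h : D1 x = D2 x) : D1 = D2 := by
  apply Derivation.ext_of_adjoin_eq_top {x} (adjoin_x_eq_top b x hb)
  intro y hy
  rw [Set.mem_singleton_iff] at hy
  subst hy
  exact h

theorem derivation_eq_smul_del (hx : x ^ p = 0) (hb : ∀ i : Fin p, b i = x ^ (i : ℕ))
    (D : Derivation k R R) : D = D x • del b x hx hb := by
  apply derivation_ext b x hb
  rw [Derivation.smul_apply, del_x, smul_eq_mul, mul_one]

end Witt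

section Coords
variable {k : Type*} [Field k] {p : ℕ} {R : Type*} [CommRing R] [Algebra k R]
variable (b : Module.Basis (Fin p) k R) (x : R) [CharP k p]

theorem repr_mulx_basis (hx : x ^ p = 0) (hb : ∀ i : Fin p, b i = x ^ (i : ℕ)) (i j : Fin p) :
    b.repr (x * b i) j = if (j : ℕ) = (i : ℕ) + 1 then 1 else 0 := by
  rw [hb i, ← pow_succ']
  rcases lt_or_ge ((i : ℕ) + 1) p with h | h
  · rw [← hb ⟨(i : ℕ) + 1, h⟩, b.repr_self]
    rw [Finsupp.single_apply]
    congr 1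
    simp [Fin.ext_iff, eq_comm]
  · have : x ^ ((i : ℕ) + 1) = 0 := pow_eq_zero_of_le h hx
    rw [this, map_zero]
    have : ¬ ((j : ℕ) = (i : ℕ) + 1) := by omega
    simp [this]

theorem mulx_coords (hx : x ^ p = 0) (hb : ∀ i : Fin p, b i = x ^ (i : ℕ)) (y : R)
    (j : ℕ) (hj : j + 1 < p) :
    b.repr (x * y) ⟨j + 1, hj⟩ = b.repr y ⟨j, by omega⟩ := by
  conv_lhs => rw [← b.sum_repr y, Finset.mul_sum]
  rw [map_sum, Finsupp.coe_finset_sum, Finset.sum_apply]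
  rw [Finset.sum_eq_single (⟨j, by omega⟩ : Fin p)]
  · rw [mul_smul_comm, map_smul]
    rw [Finsupp.smul_apply, repr_mulx_basis b x hx hb]
    simp
  · intro i _ hne
    rw [mul_smul_comm, map_smul, Finsupp.smul_apply, repr_mulx_basis b x hx hb]
    have hne' : (i : ℕ) ≠ j := by simpa [Fin.ext_iff] using hne
    have : ¬ ((j + 1 : ℕ) = (i : ℕ) + 1) := by omega
    simp [this, Ne.symm hne']
  · intro hmem
    exact absurd (Finset.mem_univ _) hmem

theorem repr_del0_basis (hx : x ^ p = 0) (hb : ∀ i : Fin p, b i = x ^ (i : ℕ)) (i j : Fin p) :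
    b.repr (del0 b x (b i)) j = if (i : ℕ) = (j : ℕ) + 1 then ((j : k) + 1) else 0 := by
  have hdb : del0 b x (b i) = ((i : ℕ) : k) • x ^ ((i : ℕ) - 1) :=
    b.constr_basis k (fun i : Fin p => ((i : ℕ) : k) • x ^ ((i : ℕ) - 1)) i
  rw [hdb]
  rcases Nat.eq_zero_or_pos (i : ℕ) with h0 | h0
  · rw [h0]
    have : ¬ ((0 : ℕ) = (j : ℕ) + 1) := by omega
    simp [this]
  · have hlt : (i : ℕ) - 1 < p := by omega
    rw [← hb ⟨(i : ℕ) - 1, hlt⟩, map_smul, Finsupp.smul_apply, b.repr_self,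
      Finsupp.single_apply]
    by_cases hij : (i : ℕ) = (j : ℕ) + 1
    · have : (⟨(i : ℕ) - 1, hlt⟩ : Fin p) = j := by
        simp [Fin.ext_iff]; omega
      rw [if_pos this, if_pos hij]
      have : ((i : ℕ) : k) = ((j : ℕ) : k) + 1 := by
        rw [hij]; push_cast; ring
      simp [this]
    · have : ¬ ((⟨(i : ℕ) - 1, hlt⟩ : Fin p) = j) := by
        simp only [Fin.ext_iff]
        omega
      rw [if_neg this, if_neg hij]
      simp

theorem del0_coords (hx : x ^ p = 0) (hb : ∀ i : Fin p, b i = x ^ (i : ℕ)) (y : R)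
    (j : ℕ) (hj : j + 1 < p) :
    b.repr (del0 b x y) ⟨j, by omega⟩ = ((j : k) + 1) * b.repr y ⟨j + 1, hj⟩ := by
  conv_lhs => rw [← b.sum_repr y, map_sum]
  rw [map_sum, Finsupp.coe_finset_sum, Finset.sum_apply]
  rw [Finset.sum_eq_single (⟨j + 1, hj⟩ : Fin p)]
  · rw [map_smul, map_smul, Finsupp.smul_apply, repr_del0_basis b x hx hb]
    rw [if_pos rfl]
    simp [mul_comm]
  · intro i _ hne
    rw [map_smul, map_smul, Finsupp.smul_apply, repr_del0_basis b x hx hb]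
    have hne' : (i : ℕ) ≠ j + 1 := by simpa [Fin.ext_iff] using hne
    have : ¬ ((i : ℕ) = j + 1) := hne'
    simp [this]
  · intro hmem
    exact absurd (Finset.mem_univ _) hmem

theorem shift_lemma (hx : x ^ p = 0) (hb : ∀ i : Fin p, b i = x ^ (i : ℕ)) (y : R) (n : ℕ)
    (hc : ∀ i : Fin p, (i : ℕ) < n → b.repr y i = 0) : ∃ t : R, y = x ^ n * t := by
  refine ⟨∑ i : Fin p, b.repr y i • x ^ ((i : ℕ) - n), ?_⟩
  rw [Finset.mul_sum]
  conv_lhs => rw [← b.sum_repr y]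
  refine Finset.sum_congr rfl ?_
  intro i _
  rw [hb i]
  by_cases hi : (i : ℕ) < n
  · rw [hc i hi, zero_smul, zero_smul, mul_zero]
  · rw [mul_smul_comm, ← pow_add]
    congr 2
    omega

theorem isUnit_of_repr_zero_ne (hp : p.Prime) (hx : x ^ p = 0)
    (hb : ∀ i : Fin p, b i = x ^ (i : ℕ)) (y : R)
    (h0 : b.repr y ⟨0, hp.pos⟩ ≠ 0) : IsUnit y := by
  set c : k := b.repr y ⟨0, hp.pos⟩ with hc
  have hone : (1 : R) = b ⟨0, hp.pos⟩ := by rw [hb]; simp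
  have hcoord : ∀ i : Fin p, (i : ℕ) < 1 → b.repr (y - algebraMap k R c) i = 0 := by
    intro i hi
    have : i = ⟨0, hp.pos⟩ := by
      apply Fin.ext
      simpa using hi
    subst this
    rw [map_sub, Algebra.algebraMap_eq_smul_one, hone, map_smul]
    simp [Finsupp.single_apply, hc]
  obtain ⟨t, ht⟩ := shift_lemma b x hx hb _ 1 hcoord
  rw [pow_one] at ht
  have hy : y = algebraMap k R c + x * t := by rw [← ht]; ring
  rw [hy]
  have hnil : IsNilpotent (x * t) := ⟨p, by rw [mul_pow, hx, zero_mul]⟩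
  have hu : IsUnit (algebraMap k R c) := (IsUnit.mk0 c h0).map (algebraMap k R)
  exact hnil.isUnit_add_left_of_commute hu (Commute.all _ _)

theorem structure_lemma (hp : p.Prime) (hx : x ^ p = 0)
    (hb : ∀ i : Fin p, b i = x ^ (i : ℕ)) (h : R)
    (hyp : x * (x * del0 b x h) = 0) :
    ∃ c d : k, h = c • (1 : R) + d • x ^ (p - 1) := by
  have hmid : ∀ i : Fin p, 1 ≤ (i : ℕ) → (i : ℕ) ≤ p - 2 → b.repr h i = 0 := by
    intro i h1 h2
    have h3 : (i : ℕ) + 1 < p := by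
      have := hp.two_le
      omega
    have h4 : ((i : ℕ) - 1) + 1 < p := by omega
    have e1 : b.repr (x * (x * del0 b x h)) ⟨((i : ℕ) - 1) + 1 + 1, by omega⟩
        = b.repr (x * del0 b x h) ⟨((i : ℕ) - 1) + 1, by omega⟩ :=
      mulx_coords b x hx hb _ _ _
    have e2 : b.repr (x * del0 b x h) ⟨((i : ℕ) - 1) + 1, by omega⟩
        = b.repr (del0 b x h) ⟨(i : ℕ) - 1, by omega⟩ :=
      mulx_coords b x hx hb _ _ _
    have e3 : b.repr (del0 b x h) ⟨(i : ℕ) - 1, by omega⟩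
        = ((((i : ℕ) - 1 : ℕ) : k) + 1) * b.repr h ⟨((i : ℕ) - 1) + 1, h4⟩ :=
      del0_coords b x hx hb h _ h4
    rw [hyp, map_zero, Finsupp.coe_zero, Pi.zero_apply] at e1
    have e4 : ((((i : ℕ) - 1 : ℕ) : k) + 1) * b.repr h ⟨((i : ℕ) - 1) + 1, h4⟩ = 0 := by
      rw [← e3, ← e2, ← e1]
    have hi' : (⟨((i : ℕ) - 1) + 1, h4⟩ : Fin p) = i := by
      apply Fin.ext
      show ((i : ℕ) - 1) + 1 = (i : ℕ)
      omega
    rw [hi'] at e4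
    have hcoef : ((((i : ℕ) - 1 : ℕ) : k) + 1) ≠ 0 := by
      have : ((((i : ℕ) - 1 : ℕ) : k) + 1) = (((i : ℕ) : ℕ) : k) := by
        have : ((i : ℕ) - 1) + 1 = (i : ℕ) := by omega
        rw [← this]
        push_cast
        ring
      rw [this]
      intro hzero
      rw [CharP.cast_eq_zero_iff k p] at hzero
      rcases hzero with ⟨m, hm⟩
      have := i.isLt
      rcases m with _ | m
      · omega
      · nlinarith
    exact (mul_eq_zero.mp e4).resolve_left hcoef
  refine ⟨b.repr h ⟨0, hp.pos⟩, b.repr h ⟨p - 1, by have := hp.pos; omega⟩, ?_⟩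
  have hone : (1 : R) = b ⟨0, hp.pos⟩ := by rw [hb]; simp
  have hlast : x ^ (p - 1) = b ⟨p - 1, by have := hp.pos; omega⟩ := by rw [hb]
  rw [hone, hlast]
  apply b.ext_elem
  intro i
  rw [map_add, map_smul, map_smul, b.repr_self, b.repr_self]
  rw [Finsupp.add_apply, Finsupp.smul_apply, Finsupp.smul_apply,
    Finsupp.single_apply, Finsupp.single_apply]
  rcases Nat.eq_zero_or_pos (i : ℕ) with h0 | h0
  · have hi : (⟨0, hp.pos⟩ : Fin p) = i := by apply Fin.ext; simp [h0]
    have hne : ¬ ((⟨p - 1, by have := hp.pos; omega⟩ : Fin p) = i) := by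
      rw [Fin.ext_iff]
      show ¬ (p - 1 = (i : ℕ))
      have := hp.two_le
      omega
    rw [if_pos hi, if_neg hne, ← hi]
    simp
  · rcases eq_or_lt_of_le (Nat.le_sub_one_of_lt i.isLt) with hl | hl
    · have hi : (⟨p - 1, by have := hp.pos; omega⟩ : Fin p) = i := by
        apply Fin.ext
        show p - 1 = (i : ℕ)
        omega
      have hne : ¬ ((⟨0, hp.pos⟩ : Fin p) = i) := by
        rw [Fin.ext_iff]
        show ¬ (0 = (i : ℕ))
        omega
      rw [if_pos hi, if_neg hne, ← hi]
      simp
    · have hmid' := hmid i h0 (by omega)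
      have hne0 : ¬ ((⟨0, hp.pos⟩ : Fin p) = i) := by
        rw [Fin.ext_iff]; show ¬ (0 = (i : ℕ)); omega
      have hnel : ¬ ((⟨p - 1, by have := hp.pos; omega⟩ : Fin p) = i) := by
        rw [Fin.ext_iff]; show ¬ (p - 1 = (i : ℕ)); omega
      rw [if_neg hne0, if_neg hnel, hmid']
      simp

theorem kernel_lemma (hp : p.Prime) (hx : x ^ p = 0)
    (hb : ∀ i : Fin p, b i = x ^ (i : ℕ)) (h : R)
    (hyp : del0 b x h = 0) : ∃ c : k, h = c • (1 : R) := by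
  have hmid : ∀ i : Fin p, 1 ≤ (i : ℕ) → b.repr h i = 0 := by
    intro i h1
    have h4 : ((i : ℕ) - 1) + 1 < p := by
      have := i.isLt
      omega
    have e3 : b.repr (del0 b x h) ⟨(i : ℕ) - 1, by omega⟩
        = ((((i : ℕ) - 1 : ℕ) : k) + 1) * b.repr h ⟨((i : ℕ) - 1) + 1, h4⟩ :=
      del0_coords b x hx hb h _ h4
    rw [hyp, map_zero, Finsupp.coe_zero, Pi.zero_apply] at e3
    have hi' : (⟨((i : ℕ) - 1) + 1, h4⟩ : Fin p) = i := by
      apply Fin.ext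
      show ((i : ℕ) - 1) + 1 = (i : ℕ)
      omega
    rw [hi'] at e3
    have hcoef : ((((i : ℕ) - 1 : ℕ) : k) + 1) ≠ 0 := by
      have heq : ((((i : ℕ) - 1 : ℕ) : k) + 1) = (((i : ℕ) : ℕ) : k) := by
        have : ((i : ℕ) - 1) + 1 = (i : ℕ) := by omega
        rw [← this]
        push_cast
        ring
      rw [heq]
      intro hzero
      rw [CharP.cast_eq_zero_iff k p] at hzero
      rcases hzero with ⟨m, hm⟩
      have := i.isLt
      rcases m with _ | m
      · omega
      · nlinarith
    exact (mul_eq_zero.mp e3.symm).resolve_left hcoef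
  refine ⟨b.repr h ⟨0, hp.pos⟩, ?_⟩
  have hone : (1 : R) = b ⟨0, hp.pos⟩ := by rw [hb]; simp
  rw [hone]
  apply b.ext_elem
  intro i
  rw [map_smul, b.repr_self, Finsupp.smul_apply, Finsupp.single_apply]
  rcases Nat.eq_zero_or_pos (i : ℕ) with h0 | h0
  · have hi : (⟨0, hp.pos⟩ : Fin p) = i := by apply Fin.ext; simp [h0]
    rw [if_pos hi, ← hi]
    simp
  · have hne : ¬ ((⟨0, hp.pos⟩ : Fin p) = i) := by
      rw [Fin.ext_iff]; show ¬ (0 = (i : ℕ)); omega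
    rw [if_neg hne, hmid i h0]
    simp

end Coords

/-- For every derivation `D` of the truncated polynomial ring `O(1;1) = k[X]/(X^p)` (i.e.
every element of the Witt algebra `W(1;1)`), the `p`-th power `D^p`, taken in
`End(O(1;1))`, lies in the line `k·D`.  Consequently, every Lie subalgebra `M` of
`W(1;1)` is restricted: for every `D ∈ M` the `p`-th power of `D` is (the endomorphism
of) an element of `M`. -/
theorem witt_pth_power_in_line_and_subalgebras_restricted
    {k : Type*} [Field k] {p : ℕ} (hp : p.Prime) [CharP k p]
    {R : Type*} [CommRing R] [Algebra k R]
    (x : R) (hx : x ^ p = 0)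
    (b : Module.Basis (Fin p) k R) (hb : ∀ i : Fin p, b i = x ^ (i : ℕ)) :
    (∀ D : Derivation k R R, ∃ c : k,
        (D.toLinearMap : Module.End k R) ^ p = c • (D.toLinearMap : Module.End k R)) ∧
    (∀ (M : LieSubalgebra k (Derivation k R R)) (D : Derivation k R R), D ∈ M →
        ∃ E : Derivation k R R, E ∈ M ∧
          (E.toLinearMap : Module.End k R) = (D.toLinearMap : Module.End k R) ^ p) := by
  haveI : Fact p.Prime := ⟨hp⟩
  haveI : Nontrivial R := ⟨b ⟨0, hp.pos⟩, 0, b.ne_zero _⟩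
  have part1 : ∀ D : Derivation k R R, ∃ c : k,
      (D.toLinearMap : Module.End k R) ^ p = c • (D.toLinearMap : Module.End k R) := by
    intro D
    set f := D x with hf
    let E := pthPowDer hp D
    set g := E x with hg
    suffices hsuf : ∃ c : k, g = c • f by
      obtain ⟨c, hc⟩ := hsuf
      refine ⟨c, ?_⟩
      have hED : E = c • D := by
        apply derivation_ext b x hb
        rw [Derivation.smul_apply, ← hf, ← hg, hc]
      have e1 : D.toLinearMap ^ p = E.toLinearMap := rfl
      have e2 : (c • D).toLinearMap = c • D.toLinearMap := rfl
      rw [e1, hED, e2]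
    have hDd : ∀ r : R, D r = f * del0 b x r := by
      intro r
      conv_lhs => rw [derivation_eq_smul_del b x hx hb D]
      rw [Derivation.smul_apply, smul_eq_mul, del_apply]
    have hEd : ∀ r : R, E r = g * del0 b x r := by
      intro r
      conv_lhs => rw [derivation_eq_smul_del b x hx hb E]
      rw [Derivation.smul_apply, smul_eq_mul, del_apply]
    have hcomm0 : D.toLinearMap ((D.toLinearMap ^ p) x)
        = (D.toLinearMap ^ p) (D.toLinearMap x) := by
      rw [← Module.End.mul_apply, ← Module.End.mul_apply, ← pow_succ', ← pow_succ]
    have h2 : D g = E f := hcomm0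
    rw [hDd g, hEd f] at h2
    have hp1 : p - 1 + 1 = p := Nat.succ_pred_eq_of_pos hp.pos
    set w := (D.toLinearMap ^ (p - 1)) x with hw
    have hgw : g = D w := by
      show (D.toLinearMap ^ p) x = D.toLinearMap ((D.toLinearMap ^ (p - 1)) x)
      rw [← Module.End.mul_apply, ← pow_succ', hp1]
    set h := del0 b x w with hh
    have hgfh : g = f * h := by rw [hgw, hDd w]
    have hdelg : del0 b x g = f * del0 b x h + h * del0 b x f := by
      rw [hgfh]
      exact del0_leibniz b x hx hb f h
    have key : f * (f * del0 b x h) = 0 := by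
      linear_combination h2 - f * hdelg + del0 b x f * hgfh
    by_cases hc0 : b.repr f ⟨0, hp.pos⟩ = 0
    · obtain ⟨t, ht⟩ := shift_lemma b x hx hb f 1 (by
        intro i hi
        have hi0 : i = ⟨0, hp.pos⟩ := Fin.ext (by simpa using hi)
        rw [hi0]; exact hc0)
      rw [pow_one] at ht
      by_cases hc1 : b.repr f ⟨1, hp.one_lt⟩ = 0
      · -- f ∈ (x²): filtration, g = 0
        have hf2 : ∀ i : Fin p, (i : ℕ) < 2 → b.repr f i = 0 := by
          intro i hi
          have : (i : ℕ) = 0 ∨ (i : ℕ) = 1 := by omega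
          rcases this with h0 | h1
          · have : i = ⟨0, hp.pos⟩ := Fin.ext (by simpa using h0)
            rw [this]; exact hc0
          · have : i = ⟨1, hp.one_lt⟩ := Fin.ext (by simpa using h1)
            rw [this]; exact hc1
        obtain ⟨s, hs⟩ := shift_lemma b x hx hb f 2 hf2
        have hfil : ∀ n : ℕ, ∃ u : R, (D.toLinearMap ^ (n + 1)) x = x ^ (n + 2) * u := by
          intro n
          induction n with
          | zero => exact ⟨s, by rw [pow_one]; exact hs⟩
          | succ n ih =>
              obtain ⟨u, hu⟩ := ih
              refine ⟨x * (s * del0 b x u) + ((n + 2 : ℕ) : k) • (s * u), ?_⟩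
              have e : (D.toLinearMap ^ (n + 1 + 1)) x = D ((D.toLinearMap ^ (n + 1)) x) := by
                show _ = D.toLinearMap ((D.toLinearMap ^ (n + 1)) x)
                rw [← Module.End.mul_apply, ← pow_succ']
              rw [e, hu, hDd, del0_leibniz b x hx hb, del0_pow b x hx hb, hs]
              have en : (n + 2 : ℕ) - 1 = n + 1 := by omega
              rw [en]
              rw [Algebra.smul_def, Algebra.smul_def]
              ring
        obtain ⟨u, hu⟩ := hfil (p - 1)
        rw [hp1] at hu
        have hxp2 : x ^ (p - 1 + 2) = 0 := by
          have : p - 1 + 2 = p + 1 := by have := hp.pos; omega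
          rw [this, pow_succ, hx, zero_mul]
        have hgz : g = 0 := by
          show (D.toLinearMap ^ p) x = 0
          rw [hu, hxp2, zero_mul]
        exact ⟨0, by rw [hgz, zero_smul]⟩
      · -- f = x·t with t a unit
        have ht0 : b.repr t ⟨0, hp.pos⟩ ≠ 0 := by
          have e := mulx_coords b x hx hb t 0 hp.one_lt
          rw [← ht] at e
          rw [← e]
          exact hc1
        have hut : IsUnit t := isUnit_of_repr_zero_ne b x hp hx hb t ht0
        have h2' : t * t * (x * (x * del0 b x h)) = 0 := by
          rw [ht] at key
          linear_combination key
        have h3 : x * (x * del0 b x h) = 0 := by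
          have hiu : (((hut.mul hut).unit⁻¹ : Rˣ) : R) * (t * t) = 1 := by
            have e := (hut.mul hut).unit.inv_mul
            rwa [IsUnit.unit_spec] at e
          calc x * (x * del0 b x h)
              = ((((hut.mul hut).unit⁻¹ : Rˣ) : R) * (t * t)) * (x * (x * del0 b x h)) := by
                rw [hiu, one_mul]
            _ = (((hut.mul hut).unit⁻¹ : Rˣ) : R) * (t * t * (x * (x * del0 b x h))) := by
                ring
            _ = 0 := by rw [h2', mul_zero]
        obtain ⟨cc, d, hcd⟩ := structure_lemma b x hp hx hb h h3
        refine ⟨cc, ?_⟩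
        have hxp : x * x ^ (p - 1) = 0 := by
          rw [← pow_succ', hp1, hx]
        have hfx : f * x ^ (p - 1) = 0 := by
          rw [ht]
          linear_combination t * hxp
        rw [hgfh, hcd, mul_add, mul_smul_comm, mul_one, mul_smul_comm, hfx, smul_zero, add_zero]
    · -- f is a unit
      have huf : IsUnit f := isUnit_of_repr_zero_ne b x hp hx hb f hc0
      have hdh : del0 b x h = 0 := by
        have hiu : (((huf.mul huf).unit⁻¹ : Rˣ) : R) * (f * f) = 1 := by
          have e := (huf.mul huf).unit.inv_mul
          rwa [IsUnit.unit_spec] at e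
        calc del0 b x h
            = ((((huf.mul huf).unit⁻¹ : Rˣ) : R) * (f * f)) * del0 b x h := by
              rw [hiu, one_mul]
          _ = (((huf.mul huf).unit⁻¹ : Rˣ) : R) * (f * (f * del0 b x h)) := by ring
          _ = 0 := by rw [key, mul_zero]
      obtain ⟨cc, hcc⟩ := kernel_lemma b x hp hx hb h hdh
      refine ⟨cc, ?_⟩
      rw [hgfh, hcc, mul_smul_comm, mul_one]
  refine ⟨part1, ?_⟩
  intro M D hD
  obtain ⟨c, hc⟩ := part1 D
  refine ⟨c • D, M.smul_mem c hD, ?_⟩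
  have e2 : (c • D).toLinearMap = c • D.toLinearMap := rfl
  rw [e2, hc]
end

section
/- Over a field of characteristic p > 3, the Witt algebra W(1;1) is generated as a Lie algebra by the two elements ∂ and x^3 ∂. -/
/-- Over a field of characteristic `p > 3`, the Witt algebra
`W(1;1) = Der(k[X]/(X^p))` is generated, as a Lie algebra, by the two elements
`∂` and `x^3 ∂`. -/
theorem witt_generated_by_partial_and_x3_partial
    {k : Type*} [Field k] {p : ℕ} (hp : p.Prime) (hp3 : 3 < p) [CharP k p]
    {R : Type*} [CommRing R] [Algebra k R]
    (x : R) (hx : x ^ p = 0)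
    (b : Module.Basis (Fin p) k R) (hb : ∀ i : Fin p, b i = x ^ (i : ℕ))
    (D : Derivation k R R) (hD : D x = 1) :
    LieSubalgebra.lieSpan k (Derivation k R R) {D, x ^ 3 • D} = ⊤ := by
  set S := LieSubalgebra.lieSpan k (Derivation k R R) {D, x ^ 3 • D} with hS
  -- extensionality at x
  have hext : ∀ E1 E2 : Derivation k R R, E1 x = E2 x → E1 = E2 := by
    intro E1 E2 h
    have hlin : E1.toLinearMap = E2.toLinearMap := by
      apply Module.Basis.ext b
      intro i
      simp only [hb i, Derivation.coeFn_coe]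
      rw [Derivation.leibniz_pow, Derivation.leibniz_pow, h]
    ext r
    exact LinearMap.congr_fun hlin r
  have hpow : ∀ n : ℕ, D (x ^ (n + 1)) = ((n : R) + 1) * x ^ n := by
    intro n
    rw [Derivation.leibniz_pow, hD]
    simp [nsmul_eq_mul]
  -- generic bracket formula, with k-scalars
  have hbr : ∀ a m : ℕ, ⁅x ^ (a + 1) • D, x ^ (m + 1) • D⁆
      = ((m : k) - (a : k)) • (x ^ (a + m + 1) • D) := by
    intro a m
    apply hext
    rw [Derivation.commutator_apply]
    simp only [Derivation.smul_apply, smul_eq_mul, hD, mul_one]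
    rw [hpow, hpow]
    simp only [Algebra.smul_def, map_sub, map_natCast, Derivation.smul_apply, smul_eq_mul, hD,
      mul_one]
    ring
  have hbr0 : ∀ m : ℕ, ⁅D, x ^ (m + 1) • D⁆ = ((m : k) + 1) • (x ^ m • D) := by
    intro m
    apply hext
    rw [Derivation.commutator_apply]
    simp only [Derivation.smul_apply, smul_eq_mul, hD, mul_one]
    rw [hpow]
    simp only [Algebra.smul_def, map_add, map_natCast, map_one, Derivation.smul_apply,
      smul_eq_mul, hD, mul_one, map_mul, Derivation.map_one_eq_zero]
    ring
  -- a way to extract membership from bracket identities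
  have hdiv : ∀ (c : k) (A B E : Derivation k R R), c ≠ 0 → A ∈ S → B ∈ S →
      ⁅A, B⁆ = c • E → E ∈ S := by
    intro c A B E hc hA hB hEq
    have : E = c⁻¹ • ⁅A, B⁆ := by rw [hEq, smul_smul, inv_mul_cancel₀ hc, one_smul]
    rw [this]
    exact S.smul_mem _ (S.lie_mem hA hB)
  have hcast : ∀ n : ℕ, 0 < n → n < p → (n : k) ≠ 0 := by
    intro n hn hnp h
    rw [CharP.cast_eq_zero_iff k p] at h
    exact absurd (Nat.le_of_dvd hn h) (not_le.mpr hnp)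
  have hDmem : D ∈ S := LieSubalgebra.subset_lieSpan (by left; rfl)
  have h3 : x ^ 3 • D ∈ S := LieSubalgebra.subset_lieSpan (by right; rfl)
  have h2 : x ^ 2 • D ∈ S := by
    refine hdiv ((2:ℕ) + 1) D (x ^ 3 • D) _ ?_ hDmem h3 (hbr0 2)
    exact_mod_cast hcast 3 (by norm_num) hp3
  have h1 : x ^ 1 • D ∈ S := by
    refine hdiv ((1:ℕ) + 1) D (x ^ 2 • D) _ ?_ hDmem h2 (hbr0 1)
    exact_mod_cast hcast 2 (by norm_num) (by omega)
  -- all powers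
  have key : ∀ n : ℕ, x ^ n • D ∈ S := by
    have step : ∀ n : ℕ, 3 ≤ n → x ^ n • D ∈ S → x ^ (n + 1) • D ∈ S := by
      intro n hn hmem
      by_cases hnp : n < p
      · -- x^(n+1) • D = (n-2)⁻¹ • ⁅x^2 • D, x^n • D⁆
        have hb2 := hbr 1 (n - 1)
        have hn1 : n - 1 + 1 = n := by omega
        rw [hn1] at hb2
        have hexp : 1 + (n - 1) + 1 = n + 1 := by omega
        rw [hexp] at hb2
        refine hdiv _ _ _ _ ?_ h2 hmem hb2
        have : ((n - 1 : ℕ) : k) - ((1 : ℕ) : k) = ((n - 2 : ℕ) : k) := by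
          simp only [Nat.cast_sub (show 1 ≤ n by omega), Nat.cast_sub (show 2 ≤ n by omega),
            Nat.cast_one, Nat.cast_ofNat]
          ring
        rw [this]
        exact hcast (n - 2) (by omega) (by omega)
      · -- x^(n+1) = 0
        have : x ^ (n + 1) = 0 := by
          have : x ^ (n + 1) = x ^ p * x ^ (n + 1 - p) := by
            rw [← pow_add]; congr 1; omega
          rw [this, hx, zero_mul]
        rw [this, zero_smul]
        exact S.zero_mem
    intro n
    induction n with
    | zero => simpa using hDmem
    | succ m ih =>
      match m, ih with
      | 0, _ => exact h1
      | 1, _ => exact h2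
      | 2, _ => exact h3
      | (m + 3), ih => exact step (m + 3) (by omega) ih
  -- conclude
  rw [eq_top_iff]
  intro E _
  have hE : E = E x • D := by
    apply hext
    simp [hD]
  rw [hE, ← b.sum_repr (E x), Finset.sum_smul]
  refine S.sum_mem ?_
  intro i _
  rw [smul_assoc, hb i]
  exact S.smul_mem _ (key i)
end

section
/- Over a field of characteristic 3, the Witt algebra W(1;1) is isomorphic as a Lie algebra to sl_2(k). -/
section Aux

variable {k : Type*} [Field k] [CharP k 3]
  {R : Type*} [CommRing R] [Algebra k R]
  (x : R) (b : Module.Basis (Fin 3) k R) (D : Derivation k R R)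

/-- Two derivations agreeing on `x` are equal. -/
theorem witt_ext (hb : ∀ i : Fin 3, b i = x ^ (i : ℕ))
    {E F : Derivation k R R} (h : E x = F x) : E = F := by
  have : (E : R →ₗ[k] R) = F := by
    apply b.ext
    intro i
    rw [hb i]
    fin_cases i
    · simp
    · simpa using h
    · show E (x ^ 2) = F (x ^ 2)
      rw [sq, Derivation.leibniz, Derivation.leibniz, h]
  ext a
  exact LinearMap.congr_fun this a

/-- The element of `R` attached to a 2x2 matrix. -/
def wittElt (m : Matrix (Fin 2) (Fin 2) k) : R :=
  algebraMap k R (m 1 1) * x + algebraMap k R (m 0 1) * x ^ 2 - algebraMap k R (m 1 0)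

/-- The linear map from matrices to derivations. -/
noncomputable def wittPsi : Matrix (Fin 2) (Fin 2) k →ₗ[k] Derivation k R R where
  toFun m := wittElt x m • D
  map_add' m n := by
    ext a
    simp only [Derivation.smul_apply, Derivation.add_apply, wittElt, Matrix.add_apply, map_add,
      smul_eq_mul]
    ring
  map_smul' c m := by
    ext a
    simp only [Derivation.smul_apply, wittElt, Matrix.smul_apply, smul_eq_mul, map_mul,
      RingHom.id_apply, Algebra.smul_def]
    ring

theorem wittPsi_apply (m : Matrix (Fin 2) (Fin 2) k) :
    wittPsi x D m = wittElt x m • D := rfl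

end Aux

/-- Over a field of characteristic `3`, the Witt algebra `W(1;1) = Der(k[X]/(X^3))` is
isomorphic, as a Lie algebra, to `sl₂(k)`. -/
theorem witt_char_three_iso_sl2
    {k : Type*} [Field k] [CharP k 3]
    {R : Type*} [CommRing R] [Algebra k R]
    (x : R) (hx : x ^ 3 = 0)
    (b : Module.Basis (Fin 3) k R) (hb : ∀ i : Fin 3, b i = x ^ (i : ℕ))
    (D : Derivation k R R) (hD : D x = 1) :
    Nonempty (Derivation k R R ≃ₗ⁅k⁆ ↥(LieAlgebra.SpecialLinear.sl (Fin 2) k)) := by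
  have h3 : (3 : R) = 0 := by
    have : ((3 : ℕ) : k) = 0 := CharP.cast_eq_zero k 3
    have h3k : (3 : k) = 0 := by exact_mod_cast this
    calc (3 : R) = algebraMap k R 3 := (map_ofNat (algebraMap k R) 3).symm
    _ = 0 := by rw [h3k, map_zero]
  -- value of a derivation built from a matrix, at x
  have hval : ∀ m : Matrix (Fin 2) (Fin 2) k, (wittPsi x D m) x = wittElt x m := by
    intro m
    rw [wittPsi_apply, Derivation.smul_apply, hD, smul_eq_mul, mul_one]
  -- derivative of wittElt
  have hder : ∀ m : Matrix (Fin 2) (Fin 2) k,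
      D (wittElt x m) = algebraMap k R (m 1 1) + algebraMap k R (m 0 1) * (2 * x) := by
    intro m
    simp only [wittElt, map_sub, map_add, Derivation.leibniz, Derivation.map_algebraMap, sq,
      Derivation.leibniz, hD, smul_eq_mul]
    ring
  -- trace-zero entries
  have htr : ∀ m : ↥(LieAlgebra.SpecialLinear.sl (Fin 2) k), m.1 0 0 = -(m.1 1 1) := by
    intro m
    have : Matrix.trace m.1 = 0 := m.2
    rw [Matrix.trace_fin_two] at this
    linear_combination this
  -- the Lie algebra hom
  let Ψ : ↥(LieAlgebra.SpecialLinear.sl (Fin 2) k) →ₗ⁅k⁆ Derivation k R R :=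
    { toLinearMap := letI := LieRing.ofAssociativeRing (A := Matrix (Fin 2) (Fin 2) k)
        (wittPsi x D).comp (LieSubalgebra.toSubmodule
        (LieAlgebra.SpecialLinear.sl (Fin 2) k)).subtype
      map_lie' := by
        intro m n
        show (wittPsi x D) (⁅m, n⁆ : ↥(LieAlgebra.SpecialLinear.sl (Fin 2) k)).1
          = ⁅(wittPsi x D) m.1, (wittPsi x D) n.1⁆
        apply witt_ext x b hb
        have hbr : (⁅m, n⁆ : ↥(LieAlgebra.SpecialLinear.sl (Fin 2) k)).1
            = m.1 * n.1 - n.1 * m.1 := rfl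
        rw [Derivation.commutator_apply, hval, hval, hval, wittPsi_apply, wittPsi_apply,
          Derivation.smul_apply, Derivation.smul_apply, hder, hder, smul_eq_mul, smul_eq_mul,
          hbr]
        simp only [wittElt, Matrix.sub_apply, Matrix.mul_apply, Fin.sum_univ_two, map_sub,
          map_add, map_mul]
        rw [htr m, htr n]
        push_cast
        linear_combination -((algebraMap k R (m.1 1 1) * algebraMap k R (n.1 1 0)
            - algebraMap k R (m.1 1 0) * algebraMap k R (n.1 1 1))
          + (algebraMap k R (m.1 0 1) * algebraMap k R (n.1 1 0)
            - algebraMap k R (m.1 1 0) * algebraMap k R (n.1 0 1)) * x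
          + (algebraMap k R (m.1 1 1) * algebraMap k R (n.1 0 1)
            - algebraMap k R (m.1 0 1) * algebraMap k R (n.1 1 1)) * x ^ 2) * h3 }
  have hΨ : ∀ m, Ψ m = wittElt x m.1 • D := fun m => rfl
  -- linear independence helper
  have hcoord : ∀ c0 c1 c2 : k, c0 • (1 : R) + c1 • x + c2 • x ^ 2 = 0 →
      c0 = 0 ∧ c1 = 0 ∧ c2 = 0 := by
    intro c0 c1 c2 h
    have li := b.linearIndependent
    rw [Fintype.linearIndependent_iff] at li
    have key := li ![c0, c1, c2] (by
      rw [Fin.sum_univ_three]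
      simp only [Matrix.cons_val_zero, Matrix.cons_val_one, Matrix.head_cons, hb,
        Fin.val_zero, Fin.val_one, Fin.val_two, pow_zero, pow_one, Matrix.cons_val_two, Matrix.tail_cons]
      convert h using 2)
    exact ⟨key 0, key 1, key 2⟩
  have hinj : Function.Injective Ψ := by
    have key : Function.Injective Ψ.toLinearMap := by
      rw [injective_iff_map_eq_zero]
      intro m hm
      replace hm : Ψ m = 0 := hm
      have h0 : wittElt x m.1 = 0 := by
        have := congrArg (fun (E : Derivation k R R) => E x) hm
        simpa [hΨ, Derivation.smul_apply, hD] using this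
      have h0' : (-(m.1 1 0)) • (1 : R) + m.1 1 1 • x + m.1 0 1 • x ^ 2 = 0 := by
        rw [← h0]
        simp only [wittElt, Algebra.smul_def, map_neg]
        ring
      obtain ⟨e0, e1, e2⟩ := hcoord _ _ _ h0'
      have e0' : m.1 1 0 = 0 := by simpa using e0
      ext i j
      fin_cases i <;> fin_cases j
      · simp [htr m, e1]
      · exact e2
      · exact e0'
      · exact e1
    exact key
  have hsurj : Function.Surjective Ψ := by
    intro E
    set a : Fin 3 → k := fun i => b.repr (E x) i with ha
    have hMtr : !![-(a 1), a 2; -(a 0), a 1] ∈ LieAlgebra.SpecialLinear.sl (Fin 2) k := by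
      have : Matrix.trace !![-(a 1), a 2; -(a 0), a 1] = 0 := by
        simp [Matrix.trace_fin_two]
      exact this
    refine ⟨⟨!![-(a 1), a 2; -(a 0), a 1], hMtr⟩, ?_⟩
    apply witt_ext x b hb
    rw [hΨ, Derivation.smul_apply, hD, smul_eq_mul, mul_one]
    have hEx : E x = a 0 • (1 : R) + a 1 • x + a 2 • x ^ 2 := by
      conv_lhs => rw [← b.sum_repr (E x)]
      rw [Fin.sum_univ_three]
      simp only [hb, Fin.val_zero, Fin.val_one, Fin.val_two, pow_zero, pow_one, ha]
    rw [hEx]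
    simp [wittElt, Algebra.smul_def]
    ring
  exact ⟨(LieEquiv.ofBijective Ψ ⟨hinj, hsurj⟩).symm⟩
end

section
/- Let k have characteristic p > 2, S = sl_2(k) with standard basis {e, h, f}, and R = O(1;1) = k[X]/(X^p). Suppose {u, v, w} is an sl2-triple in S ⊗ R (so [v,u] = 2u, [v,w] = -2w, [u,w] = v) with v = h ⊗ a for some unit a ∈ 1 + O(1;1)_{(1)}. Then a = 1, u = e ⊗ b and w = f ⊗ b^{-1} for some unit b of R. -/
open scoped TensorProduct

/-- Let `k` have characteristic `p > 2`, let `S` be a Lie algebra with basis `{E, H, F}`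
satisfying the `sl₂`-relations (so `S ≅ sl₂(k)`), and let `R = O(1;1) = k[X]/(X^p)` be
the truncated polynomial ring.  Suppose `{u, v, w}` is an `sl₂`-triple in `R ⊗ S`
(`⁅v,u⁆ = 2u`, `⁅v,w⁆ = -2w`, `⁅u,w⁆ = v`) with `v = a ⊗ H` for some unit
`a ∈ 1 + O(1;1)_{(1)}`.  Then `a = 1`, `u = b ⊗ E` and `w = b⁻¹ ⊗ F` for some unit
`b` of `R`. -/
theorem sl2_triple_in_truncated_tensor
    {k : Type*} [Field k] {p : ℕ} (hp : p.Prime) (hp2 : 2 < p) [CharP k p]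
    {R : Type*} [CommRing R] [Algebra k R]
    (x : R) (hx : x ^ p = 0)
    (b : Module.Basis (Fin p) k R) (hb : ∀ i : Fin p, b i = x ^ (i : ℕ))
    {S : Type*} [LieRing S] [LieAlgebra k S]
    (E H F : S)
    (bS : Module.Basis (Fin 3) k S)
    (hbS0 : bS 0 = E) (hbS1 : bS 1 = H) (hbS2 : bS 2 = F)
    (hHE : ⁅H, E⁆ = (2 : k) • E) (hHF : ⁅H, F⁆ = -((2 : k) • F)) (hEF : ⁅E, F⁆ = H)
    (u v w : R ⊗[k] S) (a : R)
    (ha : a - 1 ∈ Ideal.span {x})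
    (hv : v = a ⊗ₜ[k] H)
    (hvu : ⁅v, u⁆ = (2 : k) • u) (hvw : ⁅v, w⁆ = -((2 : k) • w)) (huw : ⁅u, w⁆ = v) :
    a = 1 ∧ ∃ bu : Rˣ, u = (bu : R) ⊗ₜ[k] E ∧ w = ((bu⁻¹ : Rˣ) : R) ⊗ₜ[k] F := by
  classical
  set B := bS.baseChange R with hBdef
  -- coordinates of pure tensors
  have hrep : ∀ (c : R) (j i : Fin 3), B.repr (c ⊗ₜ[k] bS j) i = if j = i then c else 0 := by
    intro c j i
    rw [hBdef, Module.Basis.baseChange_repr_tmul, Module.Basis.repr_self, Finsupp.single_apply]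
    split <;> simp
  -- comparison of triples
  have cmp : ∀ c₁ c₂ c₃ d₁ d₂ d₃ : R,
      c₁ ⊗ₜ[k] E + c₂ ⊗ₜ[k] H + c₃ ⊗ₜ[k] F = d₁ ⊗ₜ[k] E + d₂ ⊗ₜ[k] H + d₃ ⊗ₜ[k] F →
      c₁ = d₁ ∧ c₂ = d₂ ∧ c₃ = d₃ := by
    intro c₁ c₂ c₃ d₁ d₂ d₃ h
    rw [← hbS0, ← hbS1, ← hbS2] at h
    refine ⟨?_, ?_, ?_⟩
    · have := congrArg (fun z => B.repr z 0) h; simpa [hrep] using this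
    · have := congrArg (fun z => B.repr z 1) h; simpa [hrep] using this
    · have := congrArg (fun z => B.repr z 2) h; simpa [hrep] using this
  -- decomposition of an arbitrary element
  have decomp : ∀ z : R ⊗[k] S, z = (B.repr z 0) ⊗ₜ[k] E + (B.repr z 1) ⊗ₜ[k] H +
      (B.repr z 2) ⊗ₜ[k] F := by
    intro z
    conv_lhs => rw [← B.sum_repr z]
    rw [Fin.sum_univ_three]
    simp only [hBdef, Module.Basis.baseChange_apply, TensorProduct.smul_tmul', smul_eq_mul, mul_one,
      hbS0, hbS1, hbS2]
  obtain ⟨r, s, t, hu⟩ : ∃ r s t : R, u = r ⊗ₜ[k] E + s ⊗ₜ[k] H + t ⊗ₜ[k] F :=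
    ⟨_, _, _, decomp u⟩
  obtain ⟨r', s', t', hw⟩ : ∃ r s t : R, w = r ⊗ₜ[k] E + s ⊗ₜ[k] H + t ⊗ₜ[k] F :=
    ⟨_, _, _, decomp w⟩
  set A2 : R := algebraMap k R 2 with hA2def
  have h2k : (2 : k) ≠ 0 := by
    intro h
    have := (CharP.cast_eq_zero_iff k p 2).mp (by exact_mod_cast h)
    exact absurd (Nat.le_of_dvd two_pos this) (by omega)
  have hA2 : IsUnit A2 := (isUnit_iff_ne_zero.mpr h2k).map (algebraMap k R)
  -- nilpotency of a - 1
  obtain ⟨c, hc⟩ := (Ideal.mem_span_singleton).mp ha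
  have hnil : IsNilpotent (a - 1) := ⟨p, by rw [hc, mul_pow, hx, zero_mul]⟩
  have haU : IsUnit a := by
    have := hnil.isUnit_add_one
    rwa [sub_add_cancel] at this
  have haU1 : IsUnit (a + 1) := by
    have h2R : IsUnit (1 + 1 : R) := by
      have : ((1 : R) + 1) = A2 := by
        rw [hA2def]; rw [show ((2:k)) = 1 + 1 by norm_num, map_add, map_one]
      rw [this]; exact hA2
    have := hnil.isUnit_add_right_of_commute h2R (Commute.all _ _)
    rwa [show a - 1 + (1 + 1) = a + 1 by ring] at this
  -- canonical forms of the bracket relations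
  have hLu : ⁅v, u⁆ = (A2 * (a * r)) ⊗ₜ[k] E + (0 : R) ⊗ₜ[k] H + (-(A2 * (a * t))) ⊗ₜ[k] F := by
    rw [hv, hu]
    simp only [lie_add, LieAlgebra.ExtendScalars.bracket_tmul, hHE, hHF, lie_self,
      TensorProduct.tmul_zero, TensorProduct.tmul_neg, TensorProduct.tmul_smul,
      TensorProduct.smul_tmul', TensorProduct.neg_tmul, TensorProduct.zero_tmul,
      Algebra.smul_def, add_zero, ← hA2def]
  have hRu : (2 : k) • u = (A2 * r) ⊗ₜ[k] E + (A2 * s) ⊗ₜ[k] H + (A2 * t) ⊗ₜ[k] F := by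
    rw [hu]
    simp only [smul_add, TensorProduct.smul_tmul', Algebra.smul_def, ← hA2def]
  obtain ⟨e1, e2, e3⟩ := cmp _ _ _ _ _ _ (hLu.symm.trans (hvu.trans hRu))
  have hs : s = 0 := hA2.mul_left_cancel (by rw [mul_zero, ← e2])
  have hr1 : (a - 1) * r = 0 := by
    have : a * r = r := hA2.mul_left_cancel e1
    rw [sub_mul, one_mul, this, sub_self]
  have ht : t = 0 := by
    have h3 : a * t = -t := by
      have h5 : -(a * t) = t := hA2.mul_left_cancel (by rw [mul_neg, e3])
      linear_combination -h5
    have h4 : (a + 1) * t = 0 := by linear_combination h3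
    exact haU1.mul_left_cancel (by rw [h4, mul_zero])
  -- same for w
  have hLw : ⁅v, w⁆ = (A2 * (a * r')) ⊗ₜ[k] E + (0 : R) ⊗ₜ[k] H + (-(A2 * (a * t'))) ⊗ₜ[k] F := by
    rw [hv, hw]
    simp only [lie_add, LieAlgebra.ExtendScalars.bracket_tmul, hHE, hHF, lie_self,
      TensorProduct.tmul_zero, TensorProduct.tmul_neg, TensorProduct.tmul_smul,
      TensorProduct.smul_tmul', TensorProduct.neg_tmul, TensorProduct.zero_tmul,
      Algebra.smul_def, add_zero, ← hA2def]
  have hRw : -((2 : k) • w) = (-(A2 * r')) ⊗ₜ[k] E + (-(A2 * s')) ⊗ₜ[k] H +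
      (-(A2 * t')) ⊗ₜ[k] F := by
    rw [hw]
    simp only [smul_add, neg_add, TensorProduct.smul_tmul', Algebra.smul_def,
      TensorProduct.neg_tmul, ← hA2def]
  obtain ⟨f1, f2, f3⟩ := cmp _ _ _ _ _ _ (hLw.symm.trans (hvw.trans hRw))
  have hs' : s' = 0 := by
    have h5 : A2 * s' = 0 := by linear_combination f2
    exact hA2.mul_left_cancel (by rw [h5, mul_zero])
  have hr' : r' = 0 := by
    have h3 : A2 * (a * r') = A2 * (-r') := by rw [mul_neg, f1]
    have : a * r' = -r' := hA2.mul_left_cancel h3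
    have h4 : (a + 1) * r' = 0 := by rw [add_mul, one_mul, this]; ring
    exact haU1.mul_left_cancel (by rw [h4, mul_zero])
  have ht1 : (a - 1) * t' = 0 := by
    have h3 : A2 * (a * t') = A2 * t' := by
      have := f3; rw [neg_inj] at this; exact this
    have : a * t' = t' := hA2.mul_left_cancel h3
    rw [sub_mul, one_mul, this, sub_self]
  -- now u = r ⊗ E, w = t' ⊗ F
  have hu' : u = r ⊗ₜ[k] E := by rw [hu, hs, ht]; simp
  have hw' : w = t' ⊗ₜ[k] F := by rw [hw, hs', hr']; simp
  -- the last relation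
  have hrt : r * t' = a := by
    have hL : ⁅u, w⁆ = (0 : R) ⊗ₜ[k] E + (r * t') ⊗ₜ[k] H + (0 : R) ⊗ₜ[k] F := by
      rw [hu', hw', LieAlgebra.ExtendScalars.bracket_tmul, hEF]
      simp
    have hR : v = (0 : R) ⊗ₜ[k] E + a ⊗ₜ[k] H + (0 : R) ⊗ₜ[k] F := by rw [hv]; simp
    exact (cmp _ _ _ _ _ _ (hL.symm.trans (huw.trans hR))).2.1
  have hrU : IsUnit r := isUnit_of_mul_isUnit_left (hrt ▸ haU)
  have ha1 : a = 1 := by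
    have : (a - 1) * r = 0 * r := by rw [hr1, zero_mul]
    have := hrU.mul_right_cancel this
    exact sub_eq_zero.mp this
  refine ⟨ha1, ?_⟩
  have hone : r * t' = 1 := by rw [hrt, ha1]
  refine ⟨Units.mkOfMulEqOne r t' hone, hu', ?_⟩
  have : ((Units.mkOfMulEqOne r t' hone)⁻¹ : Rˣ) = (t' : R) := rfl
  rw [this, hw']
end

section
/- Let S be a finite-dimensional simple Lie algebra over a field k of characteristic p > 0 and let D be a Lie subalgebra of W(1;1) acting on O(1;1) = k[X]/(X^p) such that D is transitive (preserves no proper nonzero ideal of O(1;1)). Then the semidirect product L = (S ⊗ O(1;1)) ⋊ (Id_S ⊗ D) has trivial center. -/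
open scoped TensorProduct

/-- Let `S` be a finite-dimensional simple Lie algebra over a field `k` of
characteristic `p > 0`, let `R = O(1;1) = k[X]/(X^p)` be the truncated polynomial ring,
and let `𝔇` be a Lie subalgebra of `W(1;1) = Der(R)` which is transitive (the only
`𝔇`-stable ideals of `R` are `0` and `R`).  Then the semidirect product
`L = (S ⊗ O(1;1)) ⋊ (Id_S ⊗ 𝔇)` has trivial center: if a pair `(v, d)` with
`v ∈ R ⊗ S` and `d ∈ 𝔇` brackets to zero with every pair `(w, e)` (the bracket of the
semidirect product being `⁅(v,d),(w,e)⁆ = (⁅v,w⁆ + d·w - e·v, ⁅d,e⁆)`, where a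
derivation acts on `R ⊗ S` through the first tensor factor), then `v = 0` and
`d = 0`. -/
theorem esdp_center_trivial
    {k : Type*} [Field k] {p : ℕ} (hp : p.Prime) [CharP k p]
    {R : Type*} [CommRing R] [Algebra k R]
    (x : R) (hx : x ^ p = 0)
    (b : Module.Basis (Fin p) k R) (hb : ∀ i : Fin p, b i = x ^ (i : ℕ))
    {S : Type*} [LieRing S] [LieAlgebra k S] [LieAlgebra.IsSimple k S]
    [FiniteDimensional k S]
    (𝔇 : LieSubalgebra k (Derivation k R R))
    (htrans : ∀ I : Ideal R,
      (∀ d ∈ 𝔇, ∀ a ∈ I, (d : Derivation k R R) a ∈ I) → I = ⊥ ∨ I = ⊤)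
    (v : R ⊗[k] S) (d : Derivation k R R) (hd : d ∈ 𝔇)
    (hcent : ∀ (w : R ⊗[k] S), ∀ e ∈ 𝔇,
      ⁅v, w⁆ + LinearMap.rTensor S d.toLinearMap w
          - LinearMap.rTensor S (e : Derivation k R R).toLinearMap v = 0
        ∧ ⁅d, e⁆ = 0) :
    v = 0 ∧ d = 0 := by
  classical
  haveI : Nontrivial S := by
    by_contra h
    rw [not_nontrivial_iff_subsingleton] at h
    exact LieAlgebra.IsSimple.non_abelian (R := k) (L := S) ⟨fun x y => Subsingleton.elim _ _⟩
  -- Step 1: the bracket condition with `e = 0`.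
  have key : ∀ w : R ⊗[k] S, ⁅v, w⁆ + LinearMap.rTensor S d.toLinearMap w = 0 := by
    intro w
    have h := (hcent w 0 𝔇.zero_mem).1
    simpa using h
  -- Step 2: `⁅v, 1 ⊗ s⁆ = 0` for all `s`.
  have key1 : ∀ s : S, ⁅v, (1 : R) ⊗ₜ[k] s⁆ = 0 := by
    intro s
    have h := key ((1 : R) ⊗ₜ[k] s)
    rw [LinearMap.rTensor_tmul] at h
    simpa using h
  -- The bracket with `1 ⊗ s` is `lTensor` of `- ad s`.
  have brkt : ∀ (s : S) (u : R ⊗[k] S),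
      ⁅u, (1 : R) ⊗ₜ[k] s⁆ = - LinearMap.lTensor R (LieAlgebra.ad k S s) u := by
    intro s u
    induction u using TensorProduct.induction_on with
    | zero => simp
    | tmul r t =>
        rw [LieAlgebra.ExtendScalars.bracket_tmul, LinearMap.lTensor_tmul, mul_one,
          LieAlgebra.ad_apply, ← TensorProduct.tmul_neg, lie_skew]
    | add u₁ u₂ h₁ h₂ =>
        rw [add_lie, h₁, h₂, map_add, neg_add]
  have hlt : ∀ s : S, LinearMap.lTensor R (LieAlgebra.ad k S s) v = 0 := by
    intro s
    have h := key1 s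
    rw [brkt, neg_eq_zero] at h
    exact h
  -- coordinate maps on the first factor
  set φ : Fin p → (R ⊗[k] S →ₗ[k] S) := fun i =>
    (TensorProduct.lid k S).toLinearMap ∘ₗ LinearMap.rTensor S (b.coord i) with hφdef
  have comm : ∀ (f : S →ₗ[k] S) (i : Fin p) (u : R ⊗[k] S),
      φ i (LinearMap.lTensor R f u) = f (φ i u) := by
    intro f i u
    induction u using TensorProduct.induction_on with
    | zero => simp
    | tmul r t => simp [hφdef]
    | add u₁ u₂ h₁ h₂ => simp [map_add, h₁, h₂]
  have hφ0 : ∀ i : Fin p, φ i v = 0 := by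
    intro i
    have hmem : φ i v ∈ LieAlgebra.center k S := by
      rw [LieAlgebra.center, LieModule.mem_maxTrivSubmodule]
      intro s
      have h := comm (LieAlgebra.ad k S s) i v
      rw [hlt s, map_zero] at h
      rw [← LieAlgebra.ad_apply (R := k)]
      exact h.symm
    rw [LieAlgebra.center_eq_bot, LieSubmodule.mem_bot] at hmem
    exact hmem
  -- Step 3: conclude `v = 0`.
  have hv : v = 0 := by
    set E : R ⊗[k] S ≃ₗ[k] (Fin p →₀ S) :=
      (TensorProduct.congr b.repr (LinearEquiv.refl k S)).trans
        (TensorProduct.finsuppScalarLeft k S (Fin p)) with hEdef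
    have hE : ∀ (i : Fin p) (u : R ⊗[k] S), E u i = φ i u := by
      intro i u
      induction u using TensorProduct.induction_on with
      | zero => simp
      | tmul r t =>
          simp [hEdef, hφdef, TensorProduct.finsuppScalarLeft_apply_tmul_apply]
      | add u₁ u₂ h₁ h₂ => simp [map_add, h₁, h₂]
    have : E v = 0 := by
      ext i
      rw [hE i v, hφ0 i, Finsupp.coe_zero, Pi.zero_apply]
    rwa [LinearEquiv.map_eq_zero_iff] at this
  refine ⟨hv, ?_⟩
  -- Step 4: conclude `d = 0`.
  have hdw : ∀ w : R ⊗[k] S, LinearMap.rTensor S d.toLinearMap w = 0 := by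
    intro w
    have h := key w
    rwa [hv, zero_lie, zero_add] at h
  obtain ⟨s, hs⟩ := exists_ne (0 : S)
  obtain ⟨f, hf⟩ : ∃ f : Module.Dual k S, f s ≠ 0 := by
    by_contra h
    push_neg at h
    exact hs ((Module.forall_dual_apply_eq_zero_iff k s).mp h)
  ext r
  have h := hdw (r ⊗ₜ[k] s)
  rw [LinearMap.rTensor_tmul] at h
  have h2 := congrArg ((TensorProduct.rid k R).toLinearMap ∘ₗ LinearMap.lTensor R f) h
  simp only [map_zero, LinearMap.comp_apply, LinearMap.lTensor_tmul,
    LinearEquiv.coe_coe, TensorProduct.rid_tmul] at h2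
  have : f s • d r = 0 := h2
  have := smul_eq_zero.mp this
  rcases this with h3 | h3
  · exact absurd h3 hf
  · simpa using h3
end
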